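/- Let c₁, c₂, c₃ ∈ ℝ and let v be the vector field on ℝ³ given in the frame (e₁, e₂, e₃) by v = v¹e₁ + v²e₂ + v³e₃ with v¹ = -(c₁ cos x³ + c₂ sin x³)x¹ + (c₂ cos x³ - c₁ sin x³)x² + sin x³, v² = -(c₂ cos x³ - c₁ sin x³)x¹ - (c₁ cos x³ + c₂ sin x³)x² + cos x³, v³ = c₃. Then the Lie derivative of g along v, defined pointwise on constant vectors u, w by (ℒ_v g)_p(u, w) = D_p[q ↦ g_q(u, w)](v(p)) + g_p(Dv_p(u), w) + g_p(u, Dv_p(w)), satisfies ℒ_v g = -2c₁ g - 2(c₂ + c₃) g̃ + 2(c₁ + c₂ + c₃) η⊗η, where g̃_p(u, w) = g_p(u, φ_p w) + η(u)η(w) and η(u) = u³. -/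

import Mathlib

noncomputable section

open Real

/-- The point-dependent B-metric on `ℝ³`:
`g(∂₁,∂₁) = -g(∂₂,∂₂) = cos 2x³`, `g(∂₁,∂₂) = sin 2x³`,
`g(∂₁,∂₃) = g(∂₂,∂₃) = 0`, `g(∂₃,∂₃) = 1`. -/
def gP (p : Fin 3 → ℝ) (u w : Fin 3 → ℝ) : ℝ :=
  Real.cos (2 * p 2) * (u 0 * w 0 - u 1 * w 1)
    + Real.sin (2 * p 2) * (u 0 * w 1 + u 1 * w 0) + u 2 * w 2

/-- The frame vector field `e₁(p) = (cos x³, sin x³, 0)`. -/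
def E1 (p : Fin 3 → ℝ) : Fin 3 → ℝ := ![Real.cos (p 2), Real.sin (p 2), 0]

/-- The frame vector field `e₂(p) = (-sin x³, cos x³, 0)`. -/
def E2 (p : Fin 3 → ℝ) : Fin 3 → ℝ := ![-Real.sin (p 2), Real.cos (p 2), 0]

/-- The frame vector field `e₃(p) = (0, 0, 1)`. -/
def E3 (p : Fin 3 → ℝ) : Fin 3 → ℝ := ![0, 0, 1]

/-- The contact form `η(u) = u³`. -/
def etaR3 (u : Fin 3 → ℝ) : ℝ := u 2

/-- The potential vector field `v = v¹e₁ + v²e₂ + v³e₃` with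
`v¹ = -(c₁ cos x³ + c₂ sin x³)x¹ + (c₂ cos x³ - c₁ sin x³)x² + sin x³`,
`v² = -(c₂ cos x³ - c₁ sin x³)x¹ - (c₁ cos x³ + c₂ sin x³)x² + cos x³`,
`v³ = c₃`. -/
def vPot (c₁ c₂ c₃ : ℝ) (p : Fin 3 → ℝ) : Fin 3 → ℝ :=
  (-(c₁ * Real.cos (p 2) + c₂ * Real.sin (p 2)) * p 0
      + (c₂ * Real.cos (p 2) - c₁ * Real.sin (p 2)) * p 1 + Real.sin (p 2)) • E1 p
  + (-(c₂ * Real.cos (p 2) - c₁ * Real.sin (p 2)) * p 0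
      - (c₁ * Real.cos (p 2) + c₂ * Real.sin (p 2)) * p 1 + Real.cos (p 2)) • E2 p
  + c₃ • E3 p

/-- The Lie derivative of `g` along a vector field `v`, evaluated pointwise on
constant vectors `u, w`:
`(𝓛_v g)_p(u, w) = D_p[q ↦ g_q(u,w)](v(p)) + g_p(Dv_p u, w) + g_p(u, Dv_p w)`. -/
def lieDerG (v : (Fin 3 → ℝ) → (Fin 3 → ℝ)) (p u w : Fin 3 → ℝ) : ℝ :=
  fderiv ℝ (fun q => gP q u w) p (v p)
    + gP p (fderiv ℝ v p u) w + gP p u (fderiv ℝ v p w)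

/-!
In Cartesian coordinates the rotation of the frame cancels the rotation built into the
coefficients of `v`: the field is affine, `v(p) = A p + (0, 1, c₃)` with
`A = -c₁ P - c₂ J`, where `P` is the projection onto the `(x¹, x²)`-plane and `J` the
rotation by `π/2` in it, and `φ_p = J` at every point. The metric depends on `x³` alone, with
`∂₃ g(u, w) = -2 g(u, J w)`, and `J` is `g`-symmetric, so the three terms of the Lie
derivative are `-2 c₃ g(u, J w)`, `-2 c₁ (g - η ⊗ η)(u, w)` and `-2 c₂ g(u, J w)`.
-/

def rotJ : (Fin 3 → ℝ) →ₗ[ℝ] (Fin 3 → ℝ) :=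
  Matrix.toLin' !![0, -1, 0; 1, 0, 0; 0, 0, 0]

lemma rotJ_apply (w : Fin 3 → ℝ) : rotJ w = ![-w 1, w 0, 0] := by
  ext i; fin_cases i <;> simp [rotJ, Matrix.mulVec, dotProduct, Fin.sum_univ_three]

lemma frame_expansion (p w : Fin 3 → ℝ) :
    w = (w 0 * cos (p 2) + w 1 * sin (p 2)) • E1 p
      + (-w 0 * sin (p 2) + w 1 * cos (p 2)) • E2 p + w 2 • E3 p := by
  have h := sin_sq_add_cos_sq (p 2)
  ext i; fin_cases i
  · simp [E1, E2, E3]; linear_combination -w 0 * h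
  · simp [E1, E2, E3]; linear_combination -w 1 * h
  · simp [E1, E2, E3]

lemma span_frame (p : Fin 3 → ℝ) : Submodule.span ℝ {E1 p, E2 p, E3 p} = ⊤ := by
  refine Submodule.eq_top_iff'.2 fun w => ?_
  rw [frame_expansion p w]
  refine add_mem (add_mem ?_ ?_) ?_ <;> refine Submodule.smul_mem _ _ (Submodule.subset_span ?_)
  all_goals simp

lemma eq_rotJ_of_frame (p : Fin 3 → ℝ) (φ : (Fin 3 → ℝ) →ₗ[ℝ] (Fin 3 → ℝ))
    (h1 : φ (E1 p) = E2 p) (h2 : φ (E2 p) = -(E1 p)) (h3 : φ (E3 p) = 0) : φ = rotJ := by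
  refine LinearMap.ext_on (span_frame p) ?_
  rintro _ (rfl | rfl | rfl) <;> ext i <;> fin_cases i <;> simp_all [rotJ_apply, E1, E2, E3]

def potLinear (c₁ c₂ : ℝ) : (Fin 3 → ℝ) →L[ℝ] (Fin 3 → ℝ) :=
  (Matrix.toLin' !![-c₁, c₂, 0; -c₂, -c₁, 0; 0, 0, 0]).toContinuousLinearMap

lemma potLinear_apply (c₁ c₂ : ℝ) (u : Fin 3 → ℝ) :
    potLinear c₁ c₂ u = ![-c₁ * u 0 + c₂ * u 1, -c₂ * u 0 - c₁ * u 1, 0] := by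
  ext i; fin_cases i <;> simp [potLinear, Matrix.mulVec, dotProduct, Fin.sum_univ_three]; ring

lemma vPot_eq (c₁ c₂ c₃ : ℝ) : vPot c₁ c₂ c₃ = fun p => potLinear c₁ c₂ p + ![0, 1, c₃] := by
  funext p
  rw [potLinear_apply]
  have h := sin_sq_add_cos_sq (p 2)
  ext i; fin_cases i
  · simp [vPot, E1, E2, E3]; linear_combination (-(c₁ * p 0) + c₂ * p 1) * h
  · simp [vPot, E1, E2, E3]; linear_combination (-(c₂ * p 0) - c₁ * p 1 + 1) * h
  · simp [vPot, E1, E2, E3]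

lemma fderiv_vPot (c₁ c₂ c₃ : ℝ) (p : Fin 3 → ℝ) :
    fderiv ℝ (vPot c₁ c₂ c₃) p = potLinear c₁ c₂ := by
  rw [vPot_eq]
  exact ((potLinear c₁ c₂).hasFDerivAt.add_const _).fderiv

lemma gP_potLinear (c₁ c₂ : ℝ) (p u w : Fin 3 → ℝ) :
    gP p (potLinear c₁ c₂ u) w + gP p u (potLinear c₁ c₂ w)
      = -2 * c₁ * (gP p u w - etaR3 u * etaR3 w) - 2 * c₂ * gP p u (rotJ w) := by
  simp only [gP, potLinear_apply, rotJ_apply, etaR3, Matrix.cons_val_zero, Matrix.cons_val_one,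
    Matrix.cons_val_two, Matrix.head_cons, Matrix.tail_cons]
  ring

lemma hasFDerivAt_gP (p u w : Fin 3 → ℝ) :
    HasFDerivAt (fun q => gP q u w)
      ((-2 * gP p u (rotJ w)) • ContinuousLinearMap.proj (R := ℝ) (φ := fun _ : Fin 3 => ℝ) 2)
      p := by
  have hG : HasDerivAt (fun t => cos (2 * t) * (u 0 * w 0 - u 1 * w 1)
      + sin (2 * t) * (u 0 * w 1 + u 1 * w 0) + u 2 * w 2) (-2 * gP p u (rotJ w)) (p 2) := by
    have h2 : HasDerivAt (fun t : ℝ => 2 * t) 2 (p 2) := by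
      simpa using (hasDerivAt_id (p 2)).const_mul 2
    refine (((((hasDerivAt_cos _).comp _ h2).mul_const (u 0 * w 0 - u 1 * w 1)).add
      (((hasDerivAt_sin _).comp _ h2).mul_const (u 0 * w 1 + u 1 * w 0))).add_const
        (u 2 * w 2)).congr_deriv ?_
    simp only [gP, rotJ_apply, Matrix.cons_val_zero, Matrix.cons_val_one, Matrix.cons_val_two,
      Matrix.head_cons, Matrix.tail_cons]
    ring
  exact hG.comp_hasFDerivAt p
    (ContinuousLinearMap.proj (R := ℝ) (φ := fun _ : Fin 3 => ℝ) 2).hasFDerivAt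

/-- For the potential `v` above,
`𝓛_v g = -2c₁ g - 2(c₂+c₃) g̃ + 2(c₁+c₂+c₃) η⊗η`,
where `g̃_p(u,w) = g_p(u, φ_p w) + η(u)η(w)` and `φ_p` is the pointwise linear map
determined by `φ_p e₁(p) = e₂(p)`, `φ_p e₂(p) = -e₁(p)`, `φ_p e₃(p) = 0`. -/
theorem lie_derivative_of_potential (c₁ c₂ c₃ : ℝ)
    (φ : (Fin 3 → ℝ) → (Fin 3 → ℝ) →ₗ[ℝ] (Fin 3 → ℝ))
    (hφ1 : ∀ p : Fin 3 → ℝ, φ p (E1 p) = E2 p)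
    (hφ2 : ∀ p : Fin 3 → ℝ, φ p (E2 p) = -(E1 p))
    (hφ3 : ∀ p : Fin 3 → ℝ, φ p (E3 p) = 0) :
    ∀ (p u w : Fin 3 → ℝ),
      lieDerG (vPot c₁ c₂ c₃) p u w
        = -2 * c₁ * gP p u w
          - 2 * (c₂ + c₃) * (gP p u (φ p w) + etaR3 u * etaR3 w)
          + 2 * (c₁ + c₂ + c₃) * (etaR3 u * etaR3 w) := by
  intro p u w
  have hv₃ : vPot c₁ c₂ c₃ p 2 = c₃ := by simp [vPot_eq, potLinear_apply]
  rw [lieDerG, (hasFDerivAt_gP p u w).fderiv, fderiv_vPot, add_assoc, gP_potLinear,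
    eq_rotJ_of_frame p (φ p) (hφ1 p) (hφ2 p) (hφ3 p)]
  simp only [FunLike.coe_smul, Pi.smul_apply, ContinuousLinearMap.proj_apply, smul_eq_mul, hv₃]
  ring
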